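/- arXiv:1906.08845 — 5 statements merged into one kernel-verified Lean document; each statement's English description precedes it below -/
import Mathlib

section
/- The leading 2×2 principal minor of the 4×4 matrix ρH_II above equals r̄₁ r̄₂ f' ( f' − f''(R₁²/r̄₁ + R₂²/r̄₂) ), and the 3×3 leading principal minor equals (ρ²f'/T) times the 2×2 minor. -/
/-! The leading 2×2 block is `f' · diag(r̄₁, r̄₂) - f'' · R Rᵀ` with `R = (R₁, R₂)`, whose determinant
is computed directly. The third row of `ρH_II` vanishes off the diagonal, so expanding the leading
3×3 minor along that row splits off the factor `ρ²f'/T`. -/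

theorem Matrix.det_eq_mul_det_submatrix_castSucc_of_last_row {R : Type*} [CommRing R] {n : ℕ}
    (A : Matrix (Fin (n + 1)) (Fin (n + 1)) R) (h : ∀ j ≠ Fin.last n, A (Fin.last n) j = 0) :
    A.det = A (Fin.last n) (Fin.last n) * (A.submatrix Fin.castSucc Fin.castSucc).det := by
  rw [det_succ_row A (Fin.last n), Fintype.sum_eq_single (Fin.last n) fun j hj => by simp [h j hj]]
  simp [Fin.succAbove_last, ← two_mul, pow_mul]

theorem Matrix.det_fin_two_smul_diagonal_sub_vecMulVec {K : Type*} [Field K] (a b x y c d : K)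
    (ha : a ≠ 0) (hb : b ≠ 0) :
    !![c * a - d * x ^ 2, -(x * y * d); -(x * y * d), c * b - d * y ^ 2].det
      = a * b * c * (c - d * (x ^ 2 / a + y ^ 2 / b)) := by
  rw [Matrix.det_fin_two_of]
  field_simp
  ring

theorem stmt_9 (rb1 rb2 ρ T cv R1 R2 f' f'' : ℝ)
    (h1 : rb1 ≠ 0) (h2 : rb2 ≠ 0)
    (η : ℝ)
    (M : Matrix (Fin 4) (Fin 4) ℝ)
    (hM : M = !![f' * rb1 - f'' * R1 ^ 2, -(R1 * R2 * f''), 0, (ρ * cv / T) * R1 * f'';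
        -(R1 * R2 * f''), f' * rb2 - f'' * R2 ^ 2, 0, (ρ * cv / T) * R2 * f'';
        0, 0, ρ ^ 2 * f' / T, 0;
        (ρ * cv / T) * R1 * f'', (ρ * cv / T) * R2 * f'', 0,
          (ρ ^ 2 * cv / T ^ 2) * η]) :
    (M.submatrix (Fin.castLE (by norm_num : (2:ℕ) ≤ 4))
        (Fin.castLE (by norm_num : (2:ℕ) ≤ 4))).det
      = rb1 * rb2 * f' * (f' - f'' * (R1 ^ 2 / rb1 + R2 ^ 2 / rb2)) ∧
    (M.submatrix (Fin.castLE (by norm_num : (3:ℕ) ≤ 4))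
        (Fin.castLE (by norm_num : (3:ℕ) ≤ 4))).det
      = (ρ ^ 2 * f' / T) *
          (rb1 * rb2 * f' * (f' - f'' * (R1 ^ 2 / rb1 + R2 ^ 2 / rb2))) := by
  have minor_two : (M.submatrix (Fin.castLE (by norm_num : (2:ℕ) ≤ 4))
      (Fin.castLE (by norm_num : (2:ℕ) ≤ 4))).det
        = rb1 * rb2 * f' * (f' - f'' * (R1 ^ 2 / rb1 + R2 ^ 2 / rb2)) := by
    rw [← Matrix.det_fin_two_smul_diagonal_sub_vecMulVec rb1 rb2 R1 R2 f' f'' h1 h2, hM]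
    congr 1
    ext i j
    fin_cases i <;> fin_cases j <;> rfl
  refine ⟨minor_two, ?_⟩
  rw [Matrix.det_eq_mul_det_submatrix_castSucc_of_last_row, ← minor_two]
  · congr 1
    simp [hM]
  · intro j hj
    fin_cases j <;> simp_all
end

section
/- Let H be the (N+2)×(N+2) symmetric matrix whose (k,k) entry is (r_k/ρ_k)ξ_k for 1 ≤ k ≤ N, whose (N+1,N+1) entry is ρβ/T, whose (N+2,N+2) entry is ρc_v(β−η)/T², whose (k,N+2) and (N+2,k) entries are −(c_{vk}/T)(ξ_k−β) for 1 ≤ k ≤ N, and all other entries 0. Then det(H) = (ρβ/T³)·(∏_{k=1}^N r_kξ_k/ρ_k)·( ∑_{k=1}^N (ρ_k c_{vk}/(ξ_k(γ_k−1)))·Δ_k ), where Δ_k = (β−η)ξ_k(γ_k−1) − (ξ_k−β)² and r_k = c_{vk}(γ_k − 1). -/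
open Matrix

theorem stmt_10 (N : ℕ) (ρk cvk γ ξ : Fin N → ℝ) (β η T : ℝ)
    (hρk : ∀ k, 0 < ρk k) (hcvk : ∀ k, 0 < cvk k) (hγ : ∀ k, 1 < γ k)
    (hT : 0 < T) (hξ : ∀ k, ξ k ≠ 0) (hβ : β ≠ 0)
    (r : Fin N → ℝ) (hr : ∀ k, r k = cvk k * (γ k - 1))
    (ρ : ℝ) (hρ : ρ = ∑ k, ρk k)
    (cv : ℝ) (hcv : cv = (∑ k, ρk k * cvk k) / ρ)
    (Δ : Fin N → ℝ) (hΔ : ∀ k, Δ k = (β - η) * ξ k * (γ k - 1) - (ξ k - β) ^ 2)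
    (H : Matrix (Fin (N + 2)) (Fin (N + 2)) ℝ)
    (hH : ∀ i j : Fin (N + 2), H i j =
      if hi : (i : ℕ) < N then
        (if (i : ℕ) = (j : ℕ) then r ⟨i, hi⟩ / ρk ⟨i, hi⟩ * ξ ⟨i, hi⟩
         else if (j : ℕ) = N + 1 then -(cvk ⟨i, hi⟩ / T) * (ξ ⟨i, hi⟩ - β)
         else 0)
      else if (i : ℕ) = N then
        (if (j : ℕ) = N then ρ * β / T else 0)
      else
        (if hj : (j : ℕ) < N then -(cvk ⟨j, hj⟩ / T) * (ξ ⟨j, hj⟩ - β)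
         else if (j : ℕ) = N + 1 then ρ * cv * (β - η) / T ^ 2
         else 0)) :
    H.det = (ρ * β / T ^ 3) * (∏ k, r k * ξ k / ρk k) *
      (∑ k, ρk k * cvk k / (ξ k * (γ k - 1)) * Δ k) := by
  have hT' : T ≠ 0 := ne_of_gt hT
  have hd : ∀ k, r k / ρk k * ξ k ≠ 0 := by
    intro k
    have hrk : r k ≠ 0 := by
      rw [hr]
      exact mul_ne_zero (ne_of_gt (hcvk k)) (sub_ne_zero.2 (ne_of_gt (hγ k)))
    exact mul_ne_zero (div_ne_zero hrk (ne_of_gt (hρk k))) (hξ k)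
  set d : Fin N → ℝ := fun k => r k / ρk k * ξ k with hdef
  set a : Fin N → ℝ := fun k => -(cvk k / T) * (ξ k - β) with hadef
  set A : Matrix (Fin N) (Fin N) ℝ := Matrix.diagonal d with hA
  set B : Matrix (Fin N) (Fin 2) ℝ := Matrix.of fun k j => if (j : ℕ) = 1 then a k else 0
    with hB
  set C : Matrix (Fin 2) (Fin N) ℝ := Matrix.of fun j k => if (j : ℕ) = 1 then a k else 0
    with hC
  set E : Matrix (Fin 2) (Fin 2) ℝ :=
    Matrix.diagonal ![ρ * β / T, ρ * cv * (β - η) / T ^ 2] with hE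
  have hsub : H.submatrix finSumFinEquiv finSumFinEquiv = Matrix.fromBlocks A B C E := by
    ext i j
    cases i with
    | inl i =>
      have hiN := i.isLt
      cases j with
      | inl j =>
        have hjN := j.isLt
        simp only [submatrix_apply, finSumFinEquiv_apply_left, fromBlocks_apply₁₁, hA,
          Matrix.diagonal_apply, hH, Fin.coe_castAdd, Fin.ext_iff]
        split_ifs <;> first | rfl | omega
      | inr j =>
        have hj2 := j.isLt
        simp only [submatrix_apply, finSumFinEquiv_apply_left, finSumFinEquiv_apply_right,
          fromBlocks_apply₁₂, hB, hH, Fin.coe_castAdd, Fin.coe_natAdd, Matrix.of_apply]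
        split_ifs <;> first | rfl | omega
    | inr i =>
      have hi2 := i.isLt
      cases j with
      | inl j =>
        have hjN := j.isLt
        simp only [submatrix_apply, finSumFinEquiv_apply_left, finSumFinEquiv_apply_right,
          fromBlocks_apply₂₁, hC, hH, Fin.coe_castAdd, Fin.coe_natAdd, Matrix.of_apply]
        split_ifs <;> first | rfl | omega
      | inr j =>
        have hj2 := j.isLt
        simp only [submatrix_apply, finSumFinEquiv_apply_right, fromBlocks_apply₂₂, hE,
          Matrix.diagonal_apply, hH, Fin.coe_natAdd, Fin.ext_iff]
        fin_cases i <;> fin_cases j <;> simp <;> omega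
  have hAdet : A.det = ∏ k, d k := by simp [hA]
  have hAunit : IsUnit A.det := by
    rw [hAdet]; exact (Finset.prod_ne_zero_iff.2 fun k _ => hd k).isUnit
  haveI : Invertible A := A.invertibleOfIsUnitDet hAunit
  have hdetH : H.det = A.det * (E - C * ⅟A * B).det := by
    rw [← Matrix.det_submatrix_equiv_self finSumFinEquiv, hsub, Matrix.det_fromBlocks₁₁]
  have hinvA : ⅟A = Matrix.diagonal fun k => (d k)⁻¹ := by
    refine invOf_eq_right_inv ?_
    rw [hA, Matrix.diagonal_mul_diagonal]
    have h1 : (fun k => d k * (d k)⁻¹) = fun _ => (1 : ℝ) :=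
      funext fun k => mul_inv_cancel₀ (hd k)
    rw [h1]
    exact Matrix.diagonal_one
  set S : ℝ := ∑ k, a k * (d k)⁻¹ * a k with hS
  have hM : ∀ i j : Fin 2, (C * ⅟A * B) i j =
      if (i : ℕ) = 1 ∧ (j : ℕ) = 1 then S else 0 := by
    intro i j
    rw [hinvA, Matrix.mul_assoc, Matrix.mul_apply]
    simp only [Matrix.diagonal_mul, hB, hC, Matrix.of_apply]
    fin_cases i <;> fin_cases j <;> simp [hS, mul_assoc]
  have hdet2 : (E - C * ⅟A * B).det = (ρ * β / T) * (ρ * cv * (β - η) / T ^ 2 - S) := by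
    rw [Matrix.det_fin_two]
    simp only [Matrix.sub_apply, hM, hE, Matrix.diagonal_apply]
    norm_num
  have hρcv : ρ * cv = ∑ k, ρk k * cvk k := by
    rcases Nat.eq_zero_or_pos N with h0 | h0
    · subst h0; rw [hρ]; simp
    · have hρpos : 0 < ρ := by
        rw [hρ]
        exact Finset.sum_pos (fun k _ => hρk k)
          (Finset.univ_nonempty_iff.2 ⟨⟨0, h0⟩⟩)
      rw [hcv]; field_simp
  have hsum : ρ * cv * (β - η) / T ^ 2 - S =
      (∑ k, ρk k * cvk k / (ξ k * (γ k - 1)) * Δ k) / T ^ 2 := by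
    rw [hS, hρcv, Finset.sum_mul, Finset.sum_div, ← Finset.sum_sub_distrib, Finset.sum_div]
    refine Finset.sum_congr rfl fun k _ => ?_
    obtain ⟨g, hgpos, hgeq⟩ : ∃ g, 0 < g ∧ γ k - 1 = g :=
      ⟨γ k - 1, by linarith [hγ k], rfl⟩
    have hg0 : g ≠ 0 := ne_of_gt hgpos
    have hρ0 : ρk k ≠ 0 := ne_of_gt (hρk k)
    have hc0 : cvk k ≠ 0 := ne_of_gt (hcvk k)
    have hx0 : ξ k ≠ 0 := hξ k
    simp only [hdef, hadef, hr, hΔ, hgeq]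
    rw [mul_inv, inv_div]
    field_simp
  have hprod : (∏ k, r k * ξ k / ρk k) = ∏ k, d k :=
    Finset.prod_congr rfl fun k _ => by rw [hdef]; ring
  rw [hdetH, hAdet, hdet2, hsum, hprod]
  generalize (∑ k, ρk k * cvk k / (ξ k * (γ k - 1)) * Δ k) = Q
  generalize (∏ k, d k) = P
  field_simp
end

section
/- In the single-species case, the 3×3 symmetric matrix H with entries H₁₁ = (r/ρ)ξ, H₂₂ = ρβ/T, H₃₃ = ρc_v(β−η)/T², H₁₃ = H₃₁ = −(c_v/T)(ξ−β), other entries zero, where ξ = f'−rf'', β = f', η = c_v f'', has determinant (ρ r c_v (f')²/T³)·(f' − c_p f''), where c_p = c_v + r. -/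
open Matrix

theorem det_fin_three_of_middle_decoupled {R : Type*} [CommRing R] (a b c d : R) :
    !![a, 0, b; 0, d, 0; b, 0, c].det = d * (a * c - b ^ 2) := by
  rw [det_fin_three]
  simp only [of_apply, cons_val', cons_val_zero, cons_val_fin_one, cons_val_one, cons_val,
    mul_zero, sub_zero, zero_mul, add_zero]
  ring

theorem stmt_11_general (r ρ T cv f' f'' : ℝ)
    (cp : ℝ) (hcp : cp = cv + r)
    (ξ β η : ℝ) (hξ : ξ = f' - r * f'') (hβ : β = f') (hη : η = cv * f'') :
    (!![(r / ρ) * ξ, 0, -(cv / T) * (ξ - β);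
        0, ρ * β / T, 0;
        -(cv / T) * (ξ - β), 0, ρ * cv * (β - η) / T ^ 2]).det
      = (ρ * r * cv * f' ^ 2 / T ^ 3) * (f' - cp * f'') := by
  rw [det_fin_three_of_middle_decoupled]
  subst hcp hξ hβ hη
  -- with the junk value `r / 0 = 0`, both sides vanish at `ρ = 0`
  rcases eq_or_ne ρ 0 with rfl | hρ
  · simp
  · field_simp
    ring

theorem stmt_11 (r ρ T cv f' f'' : ℝ)
    (hr : 0 < r) (hρ : 0 < ρ) (hT : 0 < T) (hcv : 0 < cv)
    (cp : ℝ) (hcp : cp = cv + r)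
    (ξ β η : ℝ) (hξ : ξ = f' - r * f'') (hβ : β = f') (hη : η = cv * f'') :
    (!![(r / ρ) * ξ, 0, -(cv / T) * (ξ - β);
        0, ρ * β / T, 0;
        -(cv / T) * (ξ - β), 0, ρ * cv * (β - η) / T ^ 2]).det
      = (ρ * r * cv * f' ^ 2 / T ^ 3) * (f' - cp * f'') :=
  stmt_11_general r ρ T cv f' f'' cp hcp ξ β η hξ hβ hη
end

section
/- The 3×3 matrix H above is positive definite if and only if f' > 0, ξ = f' − r f'' > 0, and f' − c_p f'' > 0; moreover, given f' > 0 and f' − c_p f'' > 0 with c_p > r > 0, the condition ξ > 0 holds automatically. -/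
open Matrix

lemma aux_posdef (a b c d : ℝ) :
    (!![a, 0, c; 0, b, 0; c, 0, d] : Matrix (Fin 3) (Fin 3) ℝ).PosDef ↔
      0 < a ∧ 0 < b ∧ 0 < a * d - c ^ 2 := by
  rw [Matrix.posDef_iff_dotProduct_mulVec]
  constructor
  · rintro ⟨hherm, hpos⟩
    have h0 := hpos (x := ![1, 0, 0]) (by intro h; simpa using congrFun h 0)
    have h1 := hpos (x := ![0, 1, 0]) (by intro h; simpa using congrFun h 1)
    simp [dotProduct, mulVec, Fin.sum_univ_three] at h0 h1
    refine ⟨h0, h1, ?_⟩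
    have h2 := hpos (x := ![c, 0, -a]) (by
      intro h
      have := congrFun h 2
      simp at this
      exact h0.ne' this)
    simp [dotProduct, mulVec, Fin.sum_univ_three] at h2
    nlinarith [h2, h0]
  · rintro ⟨ha, hb, hD⟩
    constructor
    · ext i j
      fin_cases i <;> fin_cases j <;>
        simp [Matrix.conjTranspose, Matrix.transpose, vecHead, vecTail]
    · intro x hx
      obtain ⟨i, hi⟩ : ∃ i, x i ≠ 0 := by
        by_contra h
        push_neg at h
        exact hx (funext h)
      simp [dotProduct, mulVec, Fin.sum_univ_three]
      have hc2 : (0:ℝ) < a * d - c ^ 2 + c ^ 2 := by positivity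
      fin_cases i <;> simp at hi <;>
        nlinarith [sq_nonneg (a * x 0 + c * x 2), mul_nonneg hD.le (sq_nonneg (a * x 0 + 2 * c * x 2)),
          sq_nonneg (c * (a * x 0 + c * x 2)),
          mul_nonneg (mul_nonneg hD.le hD.le) (sq_nonneg (x 2)),
          mul_nonneg hb.le (sq_nonneg (x 1)), mul_pos ha hb,
          mul_pos hD (mul_pos (mul_pos ha ha) (mul_self_pos.mpr hi)),
          mul_pos ha hc2, mul_pos hD (mul_self_pos.mpr hi),
          mul_pos hb (mul_self_pos.mpr hi),
          mul_nonneg ha.le (sq_nonneg (x 0)), mul_nonneg hD.le (sq_nonneg (x 2))]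

theorem stmt_12 (r ρ T cv f' f'' : ℝ)
    (hr : 0 < r) (hρ : 0 < ρ) (hT : 0 < T) (hcv : 0 < cv)
    (cp : ℝ) (hcp : cp = cv + r)
    (ξ β η : ℝ) (hξ : ξ = f' - r * f'') (hβ : β = f') (hη : η = cv * f'')
    (H : Matrix (Fin 3) (Fin 3) ℝ)
    (hH : H = !![(r / ρ) * ξ, 0, -(cv / T) * (ξ - β);
        0, ρ * β / T, 0;
        -(cv / T) * (ξ - β), 0, ρ * cv * (β - η) / T ^ 2]) :
    (H.PosDef ↔ (0 < f' ∧ 0 < ξ ∧ 0 < f' - cp * f'')) ∧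
    (0 < f' → 0 < f' - cp * f'' → 0 < ξ) := by
  have hauto : 0 < f' → 0 < f' - cp * f'' → 0 < ξ := by
    intro h1 h2
    rcases le_or_gt 0 f'' with h | h
    · nlinarith
    · nlinarith
  refine ⟨?_, hauto⟩
  rw [hH, aux_posdef]
  have ha : 0 < (r / ρ) * ξ ↔ 0 < ξ := by
    constructor
    · intro h; nlinarith [div_pos hr hρ]
    · intro h; exact mul_pos (div_pos hr hρ) h
  have hb : 0 < ρ * β / T ↔ 0 < f' := by
    rw [hβ]
    constructor
    · intro h
      rw [div_pos_iff] at h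
      rcases h with ⟨h, -⟩ | ⟨-, h⟩
      · nlinarith
      · linarith
    · intro h; positivity
  have hDeq : (r / ρ) * ξ * (ρ * cv * (β - η) / T ^ 2) - (-(cv / T) * (ξ - β)) ^ 2
      = (r * cv / T ^ 2) * (f' * (f' - cp * f'')) := by
    subst hξ hβ hη hcp
    field_simp
    ring
  have hD : 0 < (r / ρ) * ξ * (ρ * cv * (β - η) / T ^ 2) - (-(cv / T) * (ξ - β)) ^ 2
      ↔ 0 < f' * (f' - cp * f'') := by
    rw [hDeq]
    constructor
    · intro h; nlinarith [div_pos (mul_pos hr hcv) (pow_pos hT 2)]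
    · intro h; exact mul_pos (div_pos (mul_pos hr hcv) (pow_pos hT 2)) h
  rw [ha, hb, hD]
  constructor
  · rintro ⟨h1, h2, h3⟩
    refine ⟨h2, h1, ?_⟩
    by_contra hn
    push_neg at hn
    nlinarith
  · rintro ⟨h1, h2, h3⟩
    exact ⟨h2, h1, mul_pos h1 h3⟩
end

section
/- Let G be a symmetric positive definite n×n matrix with eigenvalues in [m, M] (m > 0), A an n×n matrix with operator norm at most c, z ∈ ℝⁿ nonzero, and λ > 0 with m − 2cλM − c²λ²M > 0. Then zᵀGz − λ(zᵀGAz + (Az)ᵀGz) − λ²(Az)ᵀG(Az) > 0. -/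
open Matrix

theorem stmt_17 (n : ℕ) (G A : Matrix (Fin n) (Fin n) ℝ)
    (hG : G.PosDef) (m M c lam : ℝ) (hm : 0 < m)
    (hGm : ∀ x : Fin n → ℝ, m * (x ⬝ᵥ x) ≤ x ⬝ᵥ (G *ᵥ x))
    (hGM : ∀ x : Fin n → ℝ, x ⬝ᵥ (G *ᵥ x) ≤ M * (x ⬝ᵥ x))
    (hA : ∀ x : Fin n → ℝ, (A *ᵥ x) ⬝ᵥ (A *ᵥ x) ≤ c ^ 2 * (x ⬝ᵥ x))
    (hc : 0 < c) (hlam : 0 < lam)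
    (hCFL : 0 < m - 2 * c * lam * M - c ^ 2 * lam ^ 2 * M)
    (z : Fin n → ℝ) (hz : z ≠ 0) :
    0 < z ⬝ᵥ (G *ᵥ z)
        - lam * (z ⬝ᵥ (G *ᵥ (A *ᵥ z)) + (A *ᵥ z) ⬝ᵥ (G *ᵥ z))
        - lam ^ 2 * ((A *ᵥ z) ⬝ᵥ (G *ᵥ (A *ᵥ z))) := by
  set v := A *ᵥ z with hv
  have hS : 0 < z ⬝ᵥ z := by
    have := hG.transpose
    have h : z ⬝ᵥ z = ∑ i, z i * z i := rfl
    rcases Function.ne_iff.mp hz with ⟨i, hi⟩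
    rw [h]
    apply Finset.sum_pos' (fun j _ => mul_self_nonneg _)
    exact ⟨i, Finset.mem_univ i, mul_self_pos.mpr hi⟩
  have h1 := hGm z
  have h2 := hGM z
  have h3 := hA z
  have h4 := hGM v
  have hvv : 0 ≤ v ⬝ᵥ v := by
    have : v ⬝ᵥ v = ∑ i, v i * v i := rfl
    rw [this]; exact Finset.sum_nonneg fun j _ => mul_self_nonneg _
  have hM : 0 < M := by nlinarith
  -- nonnegativity of (c•z - v) G (c•z - v)
  have h5 : 0 ≤ (c • z - v) ⬝ᵥ (G *ᵥ (c • z - v)) := by simpa using hG.posSemidef.dotProduct_mulVec_nonneg (c • z - v)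
  have h5' : 0 ≤ c ^ 2 * (z ⬝ᵥ (G *ᵥ z)) - c * (z ⬝ᵥ (G *ᵥ v)) - c * (v ⬝ᵥ (G *ᵥ z))
      + v ⬝ᵥ (G *ᵥ v) := by
    have e : (c • z - v) ⬝ᵥ (G *ᵥ (c • z - v))
        = c ^ 2 * (z ⬝ᵥ (G *ᵥ z)) - c * (z ⬝ᵥ (G *ᵥ v)) - c * (v ⬝ᵥ (G *ᵥ z))
          + v ⬝ᵥ (G *ᵥ v) := by
      rw [mulVec_sub, mulVec_smul]
      simp [dotProduct_sub, sub_dotProduct, dotProduct_smul, smul_dotProduct,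
        smul_eq_mul]
      ring
    linarith [e ▸ h5]
  have hcross : c * (z ⬝ᵥ (G *ᵥ v) + v ⬝ᵥ (G *ᵥ z)) ≤ 2 * c ^ 2 * M * (z ⬝ᵥ z) := by
    nlinarith [sq_nonneg c]
  have hvGv : v ⬝ᵥ (G *ᵥ v) ≤ M * c ^ 2 * (z ⬝ᵥ z) := by nlinarith
  have hlc : lam * (z ⬝ᵥ (G *ᵥ v) + v ⬝ᵥ (G *ᵥ z)) ≤ 2 * lam * c * M * (z ⬝ᵥ z) := by
    rw [← mul_le_mul_iff_right₀ hc]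
    calc c * (lam * (z ⬝ᵥ (G *ᵥ v) + v ⬝ᵥ (G *ᵥ z)))
        = lam * (c * (z ⬝ᵥ (G *ᵥ v) + v ⬝ᵥ (G *ᵥ z))) := by ring
      _ ≤ lam * (2 * c ^ 2 * M * (z ⬝ᵥ z)) := by
          exact mul_le_mul_of_nonneg_left hcross hlam.le
      _ = c * (2 * lam * c * M * (z ⬝ᵥ z)) := by ring
  nlinarith [mul_le_mul_of_nonneg_left hvGv (sq_nonneg lam), hCFL, hS,
    mul_pos hCFL hS]
end
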